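/- arXiv:1602.04481 — 5 statements merged into one kernel-verified Lean document; each statement's English description precedes it below -/
import Mathlib

section
/- Let d : [ω]² → k be a stable coloring, let F be a finite set homogeneous for d with color i. Then F extends to an infinite set homogeneous for d with color i if and only if F is limit homogeneous with color i and there are infinitely many x with lim_y d(x,y) = i. -/
/-- A finite set `F` homogeneous for a stable coloring `d` with color `i` extends to an
infinite homogeneous set with color `i` iff `F` is limit homogeneous with color `i` and
there are infinitely many `x` with `lim_y d(x,y) = i`. -/
theorem stmt1 (k : ℕ) (d : ℕ → ℕ → ℕ)
    (hstable : ∀ x, ∃ s i, x < s ∧ i < k ∧ ∀ y, s ≤ y → d x y = i)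
    (F : Finset ℕ) (i : ℕ)
    (hhom : ∀ x ∈ F, ∀ y ∈ F, x < y → d x y = i) :
    (∃ H : Set ℕ, H.Infinite ∧ ↑F ⊆ H ∧ ∀ x ∈ H, ∀ y ∈ H, x < y → d x y = i) ↔
      ((∀ x ∈ F, ∃ s, ∀ y, s ≤ y → d x y = i) ∧
        {x | ∃ s, ∀ y, s ≤ y → d x y = i}.Infinite) := by
  constructor
  · rintro ⟨H, hHinf, hFH, hH⟩
    have key : ∀ x ∈ H, ∃ s, ∀ y, s ≤ y → d x y = i := by
      intro x hx
      obtain ⟨s, j, hs, hj, hd⟩ := hstable x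
      obtain ⟨y, hy, hgt⟩ := hHinf.exists_gt (max x s)
      have h1 : d x y = i := hH x hx y hy (lt_of_le_of_lt (le_max_left _ _) hgt)
      have h2 : d x y = j := hd y ((le_max_right x s).trans hgt.le)
      exact ⟨s, fun z hz => by rw [hd z hz, ← h2, h1]⟩
    exact ⟨fun x hx => key x (hFH hx), Set.Infinite.mono (fun x hx => key x hx) hHinf⟩
  · rintro ⟨hF, hL⟩
    set L := {x | ∃ s, ∀ y, s ≤ y → d x y = i} with hLdef
    have pick : ∀ b : ℕ, ∃ x, x ∈ L ∧ b ≤ x := by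
      intro b
      obtain ⟨x, hx, hgt⟩ := hL.exists_gt b
      exact ⟨x, hx, hgt.le⟩
    choose p hpL hpb using pick
    have hmemL : ∀ x ∈ L, ∃ s, ∀ y, s ≤ y → d x y = i := fun x hx => hx
    choose! t ht using hmemL
    set B : ℕ := F.sup (fun x => max (t x) (x + 1)) with hBdef
    set a : ℕ → ℕ := fun n => Nat.rec (p B) (fun _ prev => p (max (t prev) (prev + 1))) n
      with hadef
    have haL : ∀ n, a n ∈ L := by
      intro n
      cases n with
      | zero => exact hpL B
      | succ m => exact hpL _
    have ha0 : B ≤ a 0 := hpb B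
    have hsucc : ∀ n, max (t (a n)) (a n + 1) ≤ a (n + 1) := fun n => hpb _
    have hmono : StrictMono a := by
      apply strictMono_nat_of_lt_succ
      intro n
      exact lt_of_lt_of_le (Nat.lt_succ_self _) ((le_max_right _ _).trans (hsucc n))
    have hstep : ∀ m n, m < n → t (a m) ≤ a n := by
      intro m n hmn
      have h1 : t (a m) ≤ a (m + 1) := (le_max_left _ _).trans (hsucc m)
      exact h1.trans (hmono.monotone hmn)
    have hFB : ∀ x ∈ F, t x ≤ B ∧ x < B := by
      intro x hx
      constructor
      · exact le_trans (le_max_left _ _) (Finset.le_sup (f := fun x => max (t x) (x + 1)) hx)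
      · exact lt_of_lt_of_le (Nat.lt_succ_self x) ((le_max_right _ _).trans (Finset.le_sup (f := fun x => max (t x) (x + 1)) hx))
    refine ⟨↑F ∪ Set.range a, ?_, Set.subset_union_left, ?_⟩
    · exact Set.Infinite.mono Set.subset_union_right
        (Set.infinite_range_of_injective hmono.injective)
    · rintro x (hx | ⟨m, rfl⟩) y (hy | ⟨n, rfl⟩) hxy
      · exact hhom x hx y hy hxy
      · -- x ∈ F, y = a n
        have h1 : t x ≤ a n := (hFB x hx).1.trans (ha0.trans (hmono.monotone (Nat.zero_le n)))
        exact ht x (hF x hx) _ h1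
      · -- x = a m, y ∈ F : impossible
        have : y < a m := lt_of_lt_of_le (hFB y hy).2
          (ha0.trans (hmono.monotone (Nat.zero_le m)))
        omega
      · -- x = a m, y = a n
        have hmn : m < n := by
          by_contra h
          push_neg at h
          exact absurd (hmono.monotone h) (by omega)
        exact ht (a m) (haL m) _ (hstep m n hmn)
end

section
/- Let T be a well-founded labeled tree as in the tree-labeling construction, and let T^L be its labeled subtree. Then: a node α ∈ T^L is terminal in T^L iff it is terminal in T; and every non-terminal node α ∈ T^L has infinitely many successors in T^L, and these successors either all have the same numerical label w (when α has label w), or all have label ∞, or all have pairwise distinct numerical labels (the latter two cases occurring when α has label ∞). -/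
/-- `T` is closed under initial segments. -/
def IsTree (T : Set (List ℕ)) : Prop := ∀ α β : List ℕ, α ∈ T → β <+: α → β ∈ T

/-- `T` is well-founded: it has no infinite path. -/
def NoInfPath (T : Set (List ℕ)) : Prop := ¬ ∃ P : ℕ → ℕ, ∀ m, (List.range m).map P ∈ T

/-- `α` is a terminal node of `T`. -/
def Terminal (T : Set (List ℕ)) (α : List ℕ) : Prop := ∀ x, α ++ [x] ∉ T

/-- `x` is the least successor of `α` in `T` carrying its numerical label. -/
def SuccLeast (T : Set (List ℕ)) (L : List ℕ → Option ℕ) (α : List ℕ) (x : ℕ) : Prop :=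
  ∃ w, α ++ [x] ∈ T ∧ L (α ++ [x]) = some w ∧
    ∀ x' < x, ¬ (α ++ [x'] ∈ T ∧ L (α ++ [x']) = some w)

/-- Properties of the labeled subtree `T^L`: a node of `T^L` is terminal in `T^L` iff it
is terminal in `T`; and every non-terminal node of `T^L` has infinitely many successors
in `T^L`, which either all share the same numerical label, all have label `∞`, or have
pairwise distinct numerical labels. -/
theorem stmt9 (T : Set (List ℕ)) (hT : IsTree T) (hwf : NoInfPath T)
    (L : List ℕ → Option ℕ)
    -- labeling rules on `T`:
    (hlab1 : ∀ α ∈ T, Terminal T α → ∃ w, L α = some w)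
    (hlab2 : ∀ α ∈ T, ¬ Terminal T α → ∀ w, L α = some w →
      {x | α ++ [x] ∈ T ∧ L (α ++ [x]) = some w}.Infinite)
    (hlab3 : ∀ α ∈ T, ¬ Terminal T α → L α = none →
      ({x | α ++ [x] ∈ T ∧ L (α ++ [x]) = none}.Infinite ∨
        {w | ∃ x, α ++ [x] ∈ T ∧ L (α ++ [x]) = some w}.Infinite))
    (TL : Set (List ℕ))
    -- top-down definition of the labeled subtree `T^L`:
    (hroot : [] ∈ T) (hTLroot : [] ∈ TL) (hTLsub : TL ⊆ T)
    (hTLparent : ∀ α x, α ++ [x] ∈ TL → α ∈ TL)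
    (hTLw : ∀ α ∈ TL, ∀ w, L α = some w →
      ∀ x, (α ++ [x] ∈ TL ↔ α ++ [x] ∈ T ∧ L (α ++ [x]) = some w))
    (hTLinf : ∀ α ∈ TL, L α = none →
      {x | α ++ [x] ∈ T ∧ L (α ++ [x]) = none}.Infinite →
      ∀ x, (α ++ [x] ∈ TL ↔ α ++ [x] ∈ T ∧ L (α ++ [x]) = none))
    (hTLfin : ∀ α ∈ TL, L α = none →
      ¬ {x | α ++ [x] ∈ T ∧ L (α ++ [x]) = none}.Infinite →
      ∀ x, (α ++ [x] ∈ TL ↔ SuccLeast T L α x)) :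
    ∀ α ∈ TL,
      (Terminal TL α ↔ Terminal T α) ∧
      (¬ Terminal TL α →
        {x | α ++ [x] ∈ TL}.Infinite ∧
        ((∃ w, L α = some w ∧ ∀ x, α ++ [x] ∈ TL → L (α ++ [x]) = some w) ∨
          (L α = none ∧ ∀ x, α ++ [x] ∈ TL → L (α ++ [x]) = none) ∨
          (L α = none ∧ (∀ x, α ++ [x] ∈ TL → ∃ w, L (α ++ [x]) = some w) ∧
            ∀ x y, α ++ [x] ∈ TL → α ++ [y] ∈ TL → x ≠ y →
              L (α ++ [x]) ≠ L (α ++ [y])))) := by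
  classical
  intro α hαTL
  have key : ¬ Terminal T α → {x | α ++ [x] ∈ TL}.Infinite ∧
      ((∃ w, L α = some w ∧ ∀ x, α ++ [x] ∈ TL → L (α ++ [x]) = some w) ∨
        (L α = none ∧ ∀ x, α ++ [x] ∈ TL → L (α ++ [x]) = none) ∨
        (L α = none ∧ (∀ x, α ++ [x] ∈ TL → ∃ w, L (α ++ [x]) = some w) ∧
          ∀ x y, α ++ [x] ∈ TL → α ++ [y] ∈ TL → x ≠ y →
            L (α ++ [x]) ≠ L (α ++ [y]))) := by
    intro hnt
    cases hL : L α with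
    | some w =>
      have hinf := hlab2 α (hTLsub hαTL) hnt w hL
      have heq : {x | α ++ [x] ∈ TL} = {x | α ++ [x] ∈ T ∧ L (α ++ [x]) = some w} :=
        Set.ext fun x => hTLw α hαTL w hL x
      exact ⟨heq ▸ hinf,
        Or.inl ⟨w, rfl, fun x hx => ((hTLw α hαTL w hL x).1 hx).2⟩⟩
    | none =>
      by_cases hfin : {x | α ++ [x] ∈ T ∧ L (α ++ [x]) = none}.Infinite
      · have heq : {x | α ++ [x] ∈ TL} = {x | α ++ [x] ∈ T ∧ L (α ++ [x]) = none} :=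
          Set.ext fun x => hTLinf α hαTL hL hfin x
        exact ⟨heq ▸ hfin,
          Or.inr (Or.inl ⟨rfl, fun x hx => ((hTLinf α hαTL hL hfin x).1 hx).2⟩)⟩
      · have hW : {w | ∃ x, α ++ [x] ∈ T ∧ L (α ++ [x]) = some w}.Infinite :=
          (hlab3 α (hTLsub hαTL) hnt hL).resolve_left hfin
        set P : ℕ → ℕ → Prop := fun w x => α ++ [x] ∈ T ∧ L (α ++ [x]) = some w with hP
        set g : ℕ → ℕ := fun w => if h : ∃ x, P w x then Nat.find h else 0 with hg
        have hgmem : ∀ w ∈ {w | ∃ x, α ++ [x] ∈ T ∧ L (α ++ [x]) = some w},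
            α ++ [g w] ∈ TL := by
          intro w hw
          have hw' : ∃ x, P w x := hw
          have hspec := Nat.find_spec hw'
          refine (hTLfin α hαTL hL hfin (g w)).2 ⟨w, ?_, ?_, ?_⟩
          · simpa [hg, dif_pos hw'] using hspec.1
          · simpa [hg, dif_pos hw'] using hspec.2
          · intro x' hx'
            simp only [hg, dif_pos hw'] at hx'
            exact Nat.find_min hw' hx'
        have hglab : ∀ w ∈ {w | ∃ x, α ++ [x] ∈ T ∧ L (α ++ [x]) = some w},
            L (α ++ [g w]) = some w := by
          intro w hw
          have hw' : ∃ x, P w x := hw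
          have := (Nat.find_spec hw').2
          simpa [hg, dif_pos hw'] using this
        have hinj : Set.InjOn g {w | ∃ x, α ++ [x] ∈ T ∧ L (α ++ [x]) = some w} := by
          intro w1 h1 w2 h2 he
          have l1 := hglab w1 h1
          have l2 := hglab w2 h2
          rw [he, l2] at l1
          exact (Option.some.injEq _ _ ▸ l1).symm
        have hsub : g '' {w | ∃ x, α ++ [x] ∈ T ∧ L (α ++ [x]) = some w} ⊆
            {x | α ++ [x] ∈ TL} := by
          rintro _ ⟨w, hw, rfl⟩
          exact hgmem w hw
        refine ⟨((hW.image hinj).mono hsub), Or.inr (Or.inr ⟨rfl, ?_, ?_⟩)⟩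
        · intro x hx
          obtain ⟨w, _, hlx, _⟩ := (hTLfin α hαTL hL hfin x).1 hx
          exact ⟨w, hlx⟩
        · intro x y hx hy hxy hlxy
          obtain ⟨wx, hxT, hlx, hxmin⟩ := (hTLfin α hαTL hL hfin x).1 hx
          obtain ⟨wy, hyT, hly, hymin⟩ := (hTLfin α hαTL hL hfin y).1 hy
          rcases hxy.lt_or_gt with h | h
          · exact hymin x h ⟨hxT, hlxy.trans hly⟩
          · exact hxmin y h ⟨hyT, hlxy.symm.trans hlx⟩
  constructor
  · constructor
    · intro hTLt
      by_contra hnt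
      obtain ⟨x, hx⟩ := ((key hnt).1).nonempty
      exact hTLt x hx
    · intro hTt x hx
      exact hTt x (hTLsub hx)
  · intro hTLnt
    have hnt : ¬ Terminal T α := fun hTt => hTLnt (fun x hx => hTt x (hTLsub hx))
    exact key hnt
end

section
/- Let d : [ω]² → ℓ be a stable coloring, let j < ℓ, and let I ⊆ ω be an infinite set such that every infinite subset of I contains infinitely many x with lim_y d(x,y) = j. Suppose (E,I) is a Mathias-style condition where E is finite, homogeneous for d with color j, E < I, and d(x,y) = j for all x ∈ E, y ∈ I. Then there is an extension (E', I') with E' = E ∪ {x} for some x ∈ I, I' an infinite co-initial-segment-removed subset of I, such that (E', I') again satisfies all these conditions and |E'| = |E| + 1. Consequently, the condition can be extended so as to make E arbitrarily large, and hence a generic filter yields an infinite homogeneous set for d with color j. -/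
/-- One-step extension lemma for the Mathias-style forcing `𝕄_{d,I_d,j}`: any condition
`(E,I)` can be extended by one element to a condition `(E ∪ {x}, {y ∈ I | y > m})`
satisfying all the invariants, with `|E'| = |E| + 1`. -/
theorem stmt11 (ℓ : ℕ) (d : ℕ → ℕ → ℕ) (j : ℕ) (hj : j < ℓ)
    (hstable : ∀ x, ∃ s i, ∀ y, s ≤ y → d x y = i)
    (I : Set ℕ) (hIinf : I.Infinite)
    (hI : ∀ I' : Set ℕ, I' ⊆ I → I'.Infinite →
      {x ∈ I' | ∃ s, ∀ y, s ≤ y → d x y = j}.Infinite)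
    (E : Finset ℕ)
    (hhom : ∀ x ∈ E, ∀ y ∈ E, x < y → d x y = j)
    (hEI : ∀ a ∈ E, ∀ b ∈ I, a < b)
    (hdEI : ∀ x ∈ E, ∀ y ∈ I, d x y = j) :
    ∃ x ∈ I, ∃ m, x < m ∧
      ({y ∈ I | m < y} : Set ℕ).Infinite ∧
      (∀ a ∈ insert x E, ∀ b ∈ insert x E, a < b → d a b = j) ∧
      (∀ a ∈ insert x E, ∀ b ∈ ({y ∈ I | m < y} : Set ℕ), a < b) ∧
      (∀ a ∈ insert x E, ∀ b ∈ ({y ∈ I | m < y} : Set ℕ), d a b = j) ∧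
      (insert x E).card = E.card + 1 := by
  obtain ⟨x, hx⟩ := (hI I le_rfl hIinf).nonempty
  obtain ⟨hxI, s, hs⟩ := hx
  refine ⟨x, hxI, x + s + 1, by omega, ?_, ?_, ?_, ?_, ?_⟩
  · have : ({y ∈ I | x + s + 1 < y} : Set ℕ) = I \ (Set.Iic (x + s + 1)) := by
      ext y; simp only [Set.mem_setOf_eq, Set.mem_diff, Set.mem_Iic, not_le]
    rw [this]
    exact hIinf.diff (Set.finite_Iic _)
  · intro a ha b hb hab
    rcases Finset.mem_insert.mp ha with rfl | ha
    · rcases Finset.mem_insert.mp hb with rfl | hb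
      · omega
      · exact absurd (hEI b hb a hxI) (by omega)
    · rcases Finset.mem_insert.mp hb with hbe | hb
      · exact hbe ▸ hdEI a ha x hxI
      · exact hhom a ha b hb hab
  · intro a ha b hb
    obtain ⟨hbI, hbm⟩ := hb
    rcases Finset.mem_insert.mp ha with rfl | ha
    · omega
    · exact hEI a ha b hbI
  · intro a ha b hb
    obtain ⟨hbI, hbm⟩ := hb
    rcases Finset.mem_insert.mp ha with rfl | ha
    · exact hs b (by omega)
    · exact hdEI a ha b hbI
  · refine Finset.card_insert_of_notMem fun hx => ?_
    exact absurd (hEI x hx x hxI) (lt_irrefl x)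
end

section
/- Suppose I is infinite, I ⊆ I_d, and for all infinite I' ⊆ I_d with I' in a fixed family ℐ closed under the operations used, there are infinitely many x ∈ I' with lim_y d(x,y) = j. Let T^L be the labeled subtree of a well-founded tree T(n,Δ,E,I), in which every row (the set {x : α*x ∈ T^L} below any non-terminal α ∈ T^L) is an infinite subset of I lying in ℐ. Then for each β ∈ T^L and each m ∈ ω, there is a string γ such that: γ is empty or min ran(γ) ≥ m; β*γ is a terminal node of T^L; and ran(γ) is both homogeneous and limit homogeneous for d with color j. -/
/-- In a well-founded labeled subtree in which every row below a non-terminal node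
contains infinitely many `x` with `lim_y d(x,y) = j`, every node `β` and bound `m` admit
a string `γ` (empty or with entries `≥ m`) such that `β*γ` is terminal and `ran γ` is
homogeneous and limit homogeneous for `d` with color `j`. -/
theorem stmt12 (ℓ : ℕ) (d : ℕ → ℕ → ℕ) (j : ℕ)
    (hstable : ∀ x, ∃ s i, ∀ y, s ≤ y → d x y = i)
    (TL : Set (List ℕ))
    (htree : ∀ α β : List ℕ, α ∈ TL → β <+: α → β ∈ TL)
    (hwf : ¬ ∃ P : ℕ → ℕ, ∀ m, (List.range m).map P ∈ TL)
    (hrow : ∀ α ∈ TL, ¬ Terminal TL α →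
      {x | α ++ [x] ∈ TL ∧ ∃ s, ∀ y, s ≤ y → d x y = j}.Infinite) :
    ∀ β ∈ TL, ∀ m, ∃ γ : List ℕ,
      (γ = [] ∨ ∀ x ∈ γ, m ≤ x) ∧
      β ++ γ ∈ TL ∧ Terminal TL (β ++ γ) ∧
      (∀ x ∈ γ, ∀ y ∈ γ, x < y → d x y = j) ∧
      (∀ x ∈ γ, ∃ s, ∀ y, s ≤ y → d x y = j) := by
  classical
  set r : List ℕ → List ℕ → Prop := fun a b => a ∈ TL ∧ ∃ x, a = b ++ [x] with hrdef
  -- every node of TL is accessible for r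
  have hacc : ∀ β ∈ TL, Acc r β := by
    intro β hβ
    by_contra hna
    have hstep : ∀ l : List ℕ, ¬ Acc r l → ∃ a, r a l ∧ ¬ Acc r a := by
      intro l hl
      by_contra h
      push_neg at h
      exact hl (Acc.intro l fun a ha => h a ha)
    choose f hf1 hf2 using hstep
    let g : ℕ → {l : List ℕ // ¬ Acc r l} := fun n =>
      Nat.rec ⟨β, hna⟩ (fun _ p => ⟨f p.1 p.2, hf2 p.1 p.2⟩) n
    have hgr : ∀ n, r (g (n + 1)).1 (g n).1 := fun n => hf1 (g n).1 (g n).2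
    have hgT : ∀ n, (g n).1 ∈ TL := by
      intro n
      cases n with
      | zero => exact hβ
      | succ k => exact (hgr k).1
    have hpre : ∀ n k, (g n).1 <+: (g (n + k)).1 := by
      intro n k
      induction k with
      | zero => exact List.prefix_refl _
      | succ k ih =>
        obtain ⟨x, hx⟩ := (hgr (n + k)).2
        refine ih.trans ?_
        rw [show n + (k+1) = (n+k) + 1 from rfl, hx]
        exact List.prefix_append _ _
    have hlen : ∀ n, (g n).1.length = β.length + n := by
      intro n
      induction n with
      | zero => rfl
      | succ k ih =>
        obtain ⟨x, hx⟩ := (hgr k).2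
        rw [hx, List.length_append, ih]
        simp [Nat.add_assoc]
    refine hwf ⟨fun n => (g (n + 1)).1.getD n 0, ?_⟩
    intro m
    have hkey : (List.range m).map (fun n => (g (n + 1)).1.getD n 0) = (g m).1.take m := by
      apply List.ext_getElem
      · simp [hlen m]
      · intro n h1 h2
        simp only [List.getElem_map, List.getElem_range, List.getElem_take]
        have hn : n < (g (n+1)).1.length := by rw [hlen (n+1)]; omega
        have hnm : n + 1 ≤ m := by
          simpa [hlen] using h1
        have hp : (g (n+1)).1 <+: (g m).1 := by
          have := hpre (n+1) (m - (n+1))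
          rwa [Nat.add_sub_cancel' hnm] at this
        rw [List.getD_eq_getElem _ _ hn, hp.getElem hn]
    rw [hkey]
    exact htree _ _ (hgT m) (List.take_prefix _ _)
  -- main induction on accessibility
  have main : ∀ β, Acc r β → β ∈ TL → ∀ m, ∃ γ : List ℕ,
      (γ = [] ∨ ∀ x ∈ γ, m ≤ x) ∧
      β ++ γ ∈ TL ∧ Terminal TL (β ++ γ) ∧
      (∀ x ∈ γ, ∀ y ∈ γ, x < y → d x y = j) ∧
      (∀ x ∈ γ, ∃ s, ∀ y, s ≤ y → d x y = j) := by
    intro β h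
    induction h with
    | intro β _ ih =>
      intro hβ m
      by_cases hterm : Terminal TL β
      · exact ⟨[], Or.inl rfl, by simpa using hβ, by simpa using hterm, by simp, by simp⟩
      · obtain ⟨x, hx, hmx⟩ := (hrow β hβ hterm).exists_gt m
        obtain ⟨hxT, s, hs⟩ := hx
        obtain ⟨γ', h1, h2, h3, h4, h5⟩ :=
          ih (β ++ [x]) ⟨hxT, x, rfl⟩ hxT (max (max m (x + 1)) s)
        have hbig : ∀ z ∈ γ', max (max m (x + 1)) s ≤ z := by
          rcases h1 with h | h
          · subst h; simp
          · exact h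
        have hassoc : β ++ x :: γ' = (β ++ [x]) ++ γ' := by simp
        refine ⟨x :: γ', ?_, ?_, ?_, ?_, ?_⟩
        · refine Or.inr fun z hz => ?_
          rcases List.mem_cons.mp hz with rfl | hz
          · omega
          · have := hbig z hz; omega
        · rw [hassoc]; exact h2
        · rw [hassoc]; exact h3
        · intro a ha b hb hab
          rcases List.mem_cons.mp ha with rfl | ha'
          · rcases List.mem_cons.mp hb with rfl | hb'
            · omega
            · exact hs b (by have := hbig b hb'; omega)
          · rcases List.mem_cons.mp hb with rfl | hb'
            · have := hbig a ha'; omega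
            · exact h4 a ha' b hb' hab
        · intro a ha
          rcases List.mem_cons.mp ha with rfl | ha'
          · exact ⟨s, hs⟩
          · exact h5 a ha'
  exact fun β hβ m => main β (hacc β hβ) hβ m
end

section
/- Let k, ℓ ≥ 1 with k > ℓ, and suppose c : ω → k and for each i < k there is an index j_i < ℓ with the property: for every strictly increasing function f : ω → ω from a fixed countable family M with infinite range contained in I_d, there is w ∈ dom(f) with c(w) = i and lim_y d(f(w), y) = j_i. Then there exist i_0 < i_1 < k and j < ℓ with j_{i_0} = j_{i_1} = j, and for every infinite I ⊆ I_d belonging to M, there are infinitely many x ∈ I with lim_y d(x,y) = j. -/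
/-- Combining the pigeonhole argument with Lemma `infcolors`: from witnesses `j_i < ℓ`
(`i < k`, `k > ℓ`) as in the choice of `I_d`, one gets `i₀ < i₁ < k` with
`j_{i₀} = j_{i₁}`, and every infinite `I ⊆ I_d` from the family contains infinitely many
`x` with `lim_y d(x,y) = j_{i₀}`. -/
theorem stmt13 (k ℓ : ℕ) (hℓ : 1 ≤ ℓ) (hkl : ℓ < k)
    (c : ℕ → ℕ) (hc : ∀ x, c x < k)
    (d : ℕ → ℕ → ℕ) (hstable : ∀ x, ∃ s i, ∀ y, s ≤ y → d x y = i)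
    (Id : Set ℕ) (hId : Id.Infinite)
    (Mfun : Set (ℕ → ℕ)) (hMcount : Mfun.Countable) (Mset : Set (Set ℕ))
    (hclosure : ∀ I ∈ Mset, I.Infinite → ∀ n, ∃ f ∈ Mfun, StrictMono f ∧
      Set.range f = {x ∈ I | n < x})
    (j : ℕ → ℕ) (hjlt : ∀ i < k, j i < ℓ)
    (hwitness : ∀ i < k, ∀ f ∈ Mfun, StrictMono f → (Set.range f).Infinite →
      Set.range f ⊆ Id → ∃ w, c w = i ∧ ∃ s, ∀ y, s ≤ y → d (f w) y = j i) :
    ∃ i₀ i₁, i₀ < i₁ ∧ i₁ < k ∧ j i₀ = j i₁ ∧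
      ∀ I ∈ Mset, I ⊆ Id → I.Infinite →
        {x ∈ I | ∃ s, ∀ y, s ≤ y → d x y = j i₀}.Infinite := by
  -- pigeonhole
  obtain ⟨a, ha, b, hb, hab, hjab⟩ :=
    Finset.exists_ne_map_eq_of_card_lt_of_maps_to (s := Finset.range k)
      (t := Finset.range ℓ) (by simpa using hkl)
      (fun i hi => Finset.mem_range.mpr (hjlt i (Finset.mem_range.mp hi)))
  simp only [Finset.mem_range] at ha hb
  -- wlog a < b
  obtain ⟨i₀, i₁, hi01, hi1, hj01⟩ : ∃ i₀ i₁, i₀ < i₁ ∧ i₁ < k ∧ j i₀ = j i₁ := by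
    rcases lt_or_gt_of_ne hab with h | h
    · exact ⟨a, b, h, hb, hjab⟩
    · exact ⟨b, a, h, ha, hjab.symm⟩
  refine ⟨i₀, i₁, hi01, hi1, hj01, fun I hIM hIId hIinf => ?_⟩
  rw [Set.infinite_coe_iff.symm]
  rw [Set.infinite_coe_iff]
  apply Set.infinite_of_not_bddAbove
  rintro ⟨n, hn⟩
  obtain ⟨f, hfM, hfmono, hfrange⟩ := hclosure I hIM hIinf n
  have hrinf : (Set.range f).Infinite := by
    rw [hfrange]
    have : I ⊆ {x ∈ I | n < x} ∪ Finset.range (n+1) := by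
      intro x hx
      by_cases h : n < x
      · exact Or.inl ⟨hx, h⟩
      · exact Or.inr (by simpa using Nat.lt_succ_of_le (not_lt.mp h))
    intro hfin
    exact hIinf ((hfin.union (Finset.range (n+1)).finite_toSet).subset this)
  have hrId : Set.range f ⊆ Id := by
    rw [hfrange]; exact fun x hx => hIId hx.1
  obtain ⟨w, _, hs⟩ := hwitness i₀ (hi01.trans hi1) f hfM hfmono hrinf hrId
  have hfw : f w ∈ {x ∈ I | n < x} := by rw [← hfrange]; exact ⟨w, rfl⟩
  have : f w ∈ {x ∈ I | ∃ s, ∀ y, s ≤ y → d x y = j i₀} := ⟨hfw.1, hs⟩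
  exact absurd (hn this) (not_le.mpr hfw.2)
end
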